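/- Let H and R be 2×2 real matrices with determinant 1 such that the pair (H, R) is resistant, and let 0 < α < β. Then the lower spectral radius satisfies ϱ̲(αH, βR) > α = √(det(αH)). More precisely, if (H, R) is (c, ε, λ)-resistant with c, ε > 0 and λ > 1, then ϱ̲(αH, βR) ≥ min{ λα, (β/α)^ε · α }. -/

import Mathlib

open MeasureTheory Filter Topology

noncomputable section

/-- The operator norm of a `d × d` real matrix induced by the Euclidean norm on `ℝ^d`. -/
noncomputable def opNorm {d : ℕ} (A : Matrix (Fin d) (Fin d) ℝ) : ℝ :=
  ‖Matrix.toEuclideanCLM (𝕜 := ℝ) (n := Fin d) A‖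

/-- The singular values of a `d × d` real matrix, in decreasing order:
`singularValues A j` is `σ_{j+1}(A)`, the `(j+1)`-st largest singular value. -/
noncomputable def singularValues {d : ℕ} (A : Matrix (Fin d) (Fin d) ℝ) : Fin d → ℝ :=
  fun j =>
    (fun i => Real.sqrt ((show (A.transpose * A).IsHermitian by
      have h := Matrix.isHermitian_conjTranspose_mul_self A
      rwa [Matrix.conjTranspose_eq_transpose_of_trivial] at h).eigenvalues i))
      (Tuple.sort (fun i => Real.sqrt ((show (A.transpose * A).IsHermitian by
      have h := Matrix.isHermitian_conjTranspose_mul_self A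
      rwa [Matrix.conjTranspose_eq_transpose_of_trivial] at h).eigenvalues i))
        (Fin.rev j))

/-- The singular value function `φ^s(A)`. -/
noncomputable def svf {d : ℕ} (s : ℝ) (A : Matrix (Fin d) (Fin d) ℝ) : ℝ :=
  if (d : ℝ) ≤ s then |A.det| ^ (s / d)
  else ∏ i : Fin d,
    if (i : ℕ) < ⌊s⌋₊ then singularValues A i
    else if (i : ℕ) = ⌊s⌋₊ then singularValues A i ^ (s - (⌊s⌋₊ : ℝ))
    else 1

/-- The product `A_{w 0} ⋯ A_{w (n-1)}` of matrices along the word `w`. -/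
noncomputable def wordProd {d n : ℕ} (A : Fin 2 → Matrix (Fin d) (Fin d) ℝ)
    (w : Fin n → Fin 2) : Matrix (Fin d) (Fin d) ℝ :=
  (List.ofFn fun j => A (w j)).prod

/-- The probability vector `(p, 1-p)`. -/
noncomputable def pvec (p : ℝ) : Fin 2 → ℝ := ![p, 1 - p]

/-- `Σ_{i₁,…,i_n ∈ {1,2}} φ^s(A_{i₁}⋯A_{i_n})^{1−q} p_{i₁}^q ⋯ p_{i_n}^q`. -/
noncomputable def Zsum (A : Fin 2 → Matrix (Fin 2) (Fin 2) ℝ) (p q s : ℝ) (n : ℕ) : ℝ :=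
  ∑ w : Fin n → Fin 2,
    svf s (wordProd A w) ^ (1 - q) * ∏ j : Fin n, pvec p (w j) ^ q

/-- `𝔯_q(A₁, A₂, p)`. -/
noncomputable def rqDim (A : Fin 2 → Matrix (Fin 2) (Fin 2) ℝ) (p q : ℝ) : ℝ :=
  sSup {s : ℝ | 0 < s ∧ Summable (fun n : ℕ => Zsum A p q s (n + 1))}

/-- `R_q(A₁, A₂, p, s)`. -/
noncomputable def Rq (A : Fin 2 → Matrix (Fin 2) (Fin 2) ℝ) (p q s : ℝ) : ℝ :=
  limUnder atTop (fun n : ℕ => (1 / (n : ℝ)) * Real.log (Zsum A p q s n))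

/-- The minimum over all words of length `n` of the norm of the corresponding product. -/
noncomputable def minNormProd (A : Fin 2 → Matrix (Fin 2) (Fin 2) ℝ) (n : ℕ) : ℝ :=
  ⨅ w : Fin n → Fin 2, opNorm (wordProd A w)

/-- The lower spectral radius `ϱ̲(A₁, A₂)`. -/
noncomputable def lsr (A : Fin 2 → Matrix (Fin 2) (Fin 2) ℝ) : ℝ :=
  limUnder atTop (fun n : ℕ => minNormProd A n ^ (1 / (n : ℝ)))

/-- Pairs of invertible `2 × 2` matrices of operator norm less than one. -/
def validPair : Set (Matrix (Fin 2) (Fin 2) ℝ × Matrix (Fin 2) (Fin 2) ℝ) :=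
  {B | IsUnit B.1 ∧ IsUnit B.2 ∧ opNorm B.1 < 1 ∧ opNorm B.2 < 1}

/-- Rotation of `ℝ²` about the origin through angle `θ`. -/
noncomputable def rot (θ : ℝ) : Matrix (Fin 2) (Fin 2) ℝ :=
  !![Real.cos θ, -Real.sin θ; Real.sin θ, Real.cos θ]

/-- `(A₁, A₂)` is `(c, ε, λ)`-resistant. -/
def ResistantWith (c ε lam : ℝ) (A : Fin 2 → Matrix (Fin 2) (Fin 2) ℝ) : Prop :=
  ∀ n : ℕ, 1 ≤ n → ∀ w : Fin n → Fin 2,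
    ((Finset.univ.filter fun j => w j = 1).card : ℝ) ≤ ε * n →
    c * lam ^ n ≤ opNorm (wordProd A w)

/-- `(A₁, A₂)` is resistant. -/
def Resistant (A : Fin 2 → Matrix (Fin 2) (Fin 2) ℝ) : Prop :=
  ∃ c > (0:ℝ), ∃ ε > (0:ℝ), ∃ lam > (1:ℝ), ResistantWith c ε lam A

/-- `ℋ`: `2 × 2` real matrices of determinant one with two unequal real eigenvalues. -/
def Hset : Set (Matrix (Fin 2) (Fin 2) ℝ) :=
  {H | H.det = 1 ∧ ∃ a b : ℝ, a ≠ b ∧ H.charpoly.IsRoot a ∧ H.charpoly.IsRoot b}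

/-- `ℰ`: `2 × 2` real matrices of determinant one with non-real eigenvalues. -/
def Eset : Set (Matrix (Fin 2) (Fin 2) ℝ) :=
  {R | R.det = 1 ∧ ∀ x : ℝ, ¬ R.charpoly.IsRoot x}


/-- Abbreviation for the space of `2 × 2` real matrices. -/
abbrev Mat2 := Matrix (Fin 2) (Fin 2) ℝ

/-!
Write a word of length `n` containing `k` letters `R` as `α ^ (n - k) * β ^ k • P`, where `P` is the
corresponding word in `H, R`, so `det P = 1`. If `k ≤ ε n`, resistance gives `‖P‖ ≥ c λ ^ n` while
`α ^ (n - k) β ^ k ≥ α ^ n`. Otherwise `‖P‖ ≥ 1 / 2`, because `|det P| ≤ 2 ‖P‖ ^ 2` (each entry is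
bounded by the norm), while `α ^ (n - k) β ^ k = α ^ n (β / α) ^ k ≥ ((β / α) ^ ε α) ^ n`. Hence
every product of length `n` has norm at least `C m ^ n` with `m = min (λ α) ((β / α) ^ ε α)`. The
minimal norm is submultiplicative in `n`, so by Fekete's lemma its `n`-th root converges, and the
bound passes to the limit.
-/

-- In this scope `‖A‖` is the norm of `Matrix.toEuclideanCLM A`, so `opNorm A = ‖A‖` holds by `rfl`.
open scoped Matrix.Norms.L2Operator

namespace Matrix

lemma norm_apply_le_l2_opNorm {𝕜 m n : Type*} [RCLike 𝕜] [Fintype m] [Fintype n] [DecidableEq n]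
    (A : Matrix m n 𝕜) (i : m) (j : n) : ‖A i j‖ ≤ ‖A‖ := by
  have h := A.l2_opNorm_mulVec (EuclideanSpace.single j 1)
  rw [PiLp.norm_single, norm_one, mul_one] at h
  refine le_trans (le_of_eq ?_) ((PiLp.norm_apply_le _ i).trans h)
  simp [EuclideanSpace.single]

lemma abs_det_fin_two_le_two_mul_l2_opNorm_sq (A : Matrix (Fin 2) (Fin 2) ℝ) :
    |A.det| ≤ 2 * ‖A‖ ^ 2 := by
  have h00 := norm_apply_le_l2_opNorm A 0 0
  have h01 := norm_apply_le_l2_opNorm A 0 1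
  have h10 := norm_apply_le_l2_opNorm A 1 0
  have h11 := norm_apply_le_l2_opNorm A 1 1
  rw [det_fin_two]
  simp only [Real.norm_eq_abs] at *
  calc |A 0 0 * A 1 1 - A 0 1 * A 1 0| ≤ |A 0 0| * |A 1 1| + |A 0 1| * |A 1 0| := by
        rw [← abs_mul, ← abs_mul]; exact abs_sub _ _
    _ ≤ ‖A‖ * ‖A‖ + ‖A‖ * ‖A‖ := by gcongr
    _ = 2 * ‖A‖ ^ 2 := by ring

end Matrix

section WordProd

variable {d : ℕ} (A : Fin 2 → Matrix (Fin d) (Fin d) ℝ)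

@[simp]
lemma wordProd_of_isEmpty (w : Fin 0 → Fin 2) : wordProd A w = 1 := rfl

lemma wordProd_append {m n : ℕ} (v : Fin m → Fin 2) (w : Fin n → Fin 2) :
    wordProd A (Fin.append v w) = wordProd A v * wordProd A w := by
  simp [wordProd, List.ofFn_add, Fin.append_right]

lemma det_wordProd {n : ℕ} (w : Fin n → Fin 2) :
    (wordProd A w).det = ∏ j, (A (w j)).det := by
  induction n with
  | zero => simp
  | succ n ih =>
    simp only [wordProd, List.ofFn_succ, List.prod_cons, Fin.prod_univ_succ] at ih ⊢
    rw [Matrix.det_mul, ih]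

lemma wordProd_smul (s : Fin 2 → ℝ) {n : ℕ} (w : Fin n → Fin 2) :
    wordProd (fun i => s i • A i) w = (∏ j, s (w j)) • wordProd A w := by
  induction n with
  | zero => simp
  | succ n ih =>
    simp only [wordProd, List.ofFn_succ, List.prod_cons, Fin.prod_univ_succ] at ih ⊢
    rw [ih, smul_mul_smul_comm]

end WordProd

lemma prod_vec_two_comp {n : ℕ} (a b : ℝ) (w : Fin n → Fin 2) :
    ∏ j, ![a, b] (w j) =
      a ^ (n - (Finset.univ.filter fun j => w j = 1).card) *
        b ^ (Finset.univ.filter fun j => w j = 1).card := by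
  have hw : ∀ j, ![a, b] (w j) = if w j = 1 then b else a := fun j => by
    generalize w j = i; fin_cases i <;> simp
  simp_rw [hw, Finset.prod_ite, Finset.prod_const, mul_comm (b ^ _)]
  congr 2
  have := Finset.card_filter_add_card_filter_not (s := Finset.univ) (fun j => w j = 1)
  simp only [Finset.card_univ, Fintype.card_fin] at this
  omega

lemma opNorm_smul {d : ℕ} (a : ℝ) (A : Matrix (Fin d) (Fin d) ℝ) :
    opNorm (a • A) = |a| * opNorm A :=
  (norm_smul a A).trans (by rw [Real.norm_eq_abs]; rfl)

lemma opNorm_wordProd_smul {d n : ℕ} {α β : ℝ} (hα : 0 ≤ α) (hβ : 0 ≤ β)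
    (A B : Matrix (Fin d) (Fin d) ℝ) (w : Fin n → Fin 2) :
    opNorm (wordProd ![α • A, β • B] w) =
      α ^ (n - (Finset.univ.filter fun j => w j = 1).card) *
        β ^ (Finset.univ.filter fun j => w j = 1).card * opNorm (wordProd ![A, B] w) := by
  have hfam : ![α • A, β • B] = fun i => ![α, β] i • ![A, B] i := by
    funext i; fin_cases i <;> rfl
  rw [hfam, wordProd_smul, opNorm_smul, prod_vec_two_comp, abs_of_nonneg (by positivity)]

lemma pow_le_pow_sub_mul_pow {α β : ℝ} (hα : 0 ≤ α) (hαβ : α ≤ β) {k n : ℕ} (hkn : k ≤ n) :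
    α ^ n ≤ α ^ (n - k) * β ^ k := by
  rw [← pow_sub_mul_pow α hkn]
  gcongr

lemma rpow_mul_pow_le_pow_sub_mul_pow {α β ε : ℝ} (hα : 0 < α) (hαβ : α ≤ β) {k n : ℕ}
    (hkn : k ≤ n) (hk : ε * n ≤ k) : ((β / α) ^ ε * α) ^ n ≤ α ^ (n - k) * β ^ k := by
  have hba : 1 ≤ β / α := (one_le_div hα).mpr hαβ
  calc ((β / α) ^ ε * α) ^ n = (β / α) ^ (ε * n) * α ^ n := by
        rw [mul_pow, ← Real.rpow_natCast, ← Real.rpow_mul (by positivity)]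
    _ ≤ (β / α) ^ (k : ℝ) * α ^ n := by gcongr
    _ = α ^ (n - k) * β ^ k := by
        rw [Real.rpow_natCast, div_pow, ← pow_sub_mul_pow α hkn]
        field_simp

lemma inv_two_le_opNorm_of_det_eq_one {A : Mat2} (hA : A.det = 1) : (2⁻¹ : ℝ) ≤ opNorm A := by
  have h := A.abs_det_fin_two_le_two_mul_l2_opNorm_sq
  rw [hA, abs_one] at h
  nlinarith [norm_nonneg A, show opNorm A = ‖A‖ from rfl]

namespace ResistantWith

variable {H R : Mat2} {c ε lam : ℝ}

lemma le_opNorm_wordProd_smul (hres : ResistantWith c ε lam ![H, R]) (hH : H.det = 1)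
    (hR : R.det = 1) (hc : 0 < c) (hlam : 0 ≤ lam) {α β : ℝ} (hα : 0 < α) (hαβ : α ≤ β)
    {n : ℕ} (w : Fin n → Fin 2) :
    min c 2⁻¹ * min (lam * α) ((β / α) ^ ε * α) ^ n ≤ opNorm (wordProd ![α • H, β • R] w) := by
  rcases Nat.eq_zero_or_pos n with rfl | hn
  · simpa using (min_le_right c 2⁻¹).trans (inv_two_le_opNorm_of_det_eq_one Matrix.det_one)
  have hβ : 0 < β := hα.trans_le hαβ
  have hm : 0 ≤ min (lam * α) ((β / α) ^ ε * α) := le_min (by positivity) (by positivity)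
  set k := (Finset.univ.filter fun j => w j = 1).card
  have hkn : k ≤ n := (Finset.card_filter_le _ _).trans_eq (Finset.card_fin n)
  rw [opNorm_wordProd_smul hα.le (hα.le.trans hαβ)]
  by_cases hk : (k : ℝ) ≤ ε * n
  · calc min c 2⁻¹ * min (lam * α) ((β / α) ^ ε * α) ^ n ≤ α ^ n * (c * lam ^ n) := by
          rw [mul_left_comm, ← mul_pow, mul_comm α]
          gcongr
          exacts [min_le_left _ _, min_le_left _ _]
      _ ≤ α ^ (n - k) * β ^ k * opNorm (wordProd ![H, R] w) :=
          mul_le_mul (pow_le_pow_sub_mul_pow hα.le hαβ hkn) (hres n hn w hk)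
            (by positivity) (by positivity)
  · have hdet : (wordProd ![H, R] w).det = 1 := by
      rw [det_wordProd]
      exact Finset.prod_eq_one fun j _ => by generalize w j = i; fin_cases i <;> simpa
    calc min c 2⁻¹ * min (lam * α) ((β / α) ^ ε * α) ^ n
        ≤ α ^ (n - k) * β ^ k * 2⁻¹ := by
          rw [mul_comm]
          exact mul_le_mul ((pow_le_pow_left₀ hm (min_le_right _ _) n).trans
              (rpow_mul_pow_le_pow_sub_mul_pow hα hαβ hkn (not_le.mp hk).le))
            (min_le_right _ _) (by positivity) (by positivity)
      _ ≤ α ^ (n - k) * β ^ k * opNorm (wordProd ![H, R] w) := by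
          gcongr
          exact inv_two_le_opNorm_of_det_eq_one hdet

end ResistantWith

lemma le_limUnder_rpow_of_submultiplicative {f : ℕ → ℝ} (hmul : ∀ m n, f (m + n) ≤ f m * f n)
    {C r : ℝ} (hC : 0 < C) (hr : 0 < r) (hf : ∀ n, C * r ^ n ≤ f n) :
    r ≤ limUnder atTop (fun n : ℕ => f n ^ (1 / (n : ℝ))) := by
  have hpos : ∀ n, 0 < f n := fun n => (by positivity : 0 < C * r ^ n).trans_le (hf n)
  set u : ℕ → ℝ := fun n => Real.log (f n)
  have hsub : Subadditive u := fun m n => by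
    simpa only [u, Real.log_mul (hpos m).ne' (hpos n).ne'] using
      Real.log_le_log (hpos _) (hmul m n)
  have hlow : ∀ n : ℕ, 1 ≤ n → Real.log C / n + Real.log r ≤ u n / n := fun n hn => by
    have hn' : (0 : ℝ) < n := by exact_mod_cast hn
    rw [div_add' _ _ _ hn'.ne', div_le_div_iff_of_pos_right hn', mul_comm, ← Real.log_pow,
      ← Real.log_mul hC.ne' (by positivity)]
    exact Real.log_le_log (by positivity) (hf n)
  have hbdd : BddBelow (Set.range fun n => u n / n) := by
    refine ⟨min 0 (Real.log r - |Real.log C|), ?_⟩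
    rintro _ ⟨n, rfl⟩
    rcases Nat.eq_zero_or_pos n with rfl | hn
    · simp
    refine (min_le_right _ _).trans (le_trans ?_ (hlow n hn))
    have : |Real.log C / n| ≤ |Real.log C| := by
      rw [abs_div, Nat.abs_cast]
      exact div_le_self (abs_nonneg _) (by exact_mod_cast hn)
    linarith [neg_abs_le (Real.log C / n)]
  have htend : Tendsto (fun n : ℕ => f n ^ (1 / (n : ℝ))) atTop (𝓝 (Real.exp hsub.lim)) := by
    refine ((Real.continuous_exp.tendsto _).comp (hsub.tendsto_lim hbdd)).congr fun n => ?_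
    simp only [Function.comp_apply, u, Real.rpow_def_of_pos (hpos n), mul_one_div]
  have hlim : Real.log r ≤ hsub.lim := by
    refine le_of_tendsto_of_tendsto ?_ (hsub.tendsto_lim hbdd)
      ((eventually_ge_atTop 1).mono hlow)
    simpa using (tendsto_const_div_atTop_nhds_zero_nat (Real.log C)).add_const (Real.log r)
  rw [htend.limUnder_eq, ← Real.exp_log hr]
  exact Real.exp_le_exp.mpr hlim

lemma minNormProd_add_le (A : Fin 2 → Mat2) (m n : ℕ) :
    minNormProd A (m + n) ≤ minNormProd A m * minNormProd A n := by
  obtain ⟨v, hv⟩ := exists_eq_ciInf_of_finite (f := fun v : Fin m → Fin 2 => opNorm (wordProd A v))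
  obtain ⟨w, hw⟩ := exists_eq_ciInf_of_finite (f := fun w : Fin n → Fin 2 => opNorm (wordProd A w))
  calc minNormProd A (m + n) ≤ opNorm (wordProd A (Fin.append v w)) :=
        ciInf_le (Finite.bddBelow_range _) _
    _ ≤ opNorm (wordProd A v) * opNorm (wordProd A w) := by
        rw [wordProd_append]; exact norm_mul_le (wordProd A v) (wordProd A w)
    _ = minNormProd A m * minNormProd A n := by rw [hv, hw]; rfl

lemma ResistantWith.min_le_lsr_smul {H R : Mat2} {c ε lam : ℝ}
    (hres : ResistantWith c ε lam ![H, R]) (hH : H.det = 1) (hR : R.det = 1) (hc : 0 < c)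
    (hlam : 0 < lam) {α β : ℝ} (hα : 0 < α) (hαβ : α ≤ β) :
    min (lam * α) ((β / α) ^ ε * α) ≤ lsr ![α • H, β • R] :=
  have hβ : 0 < β := hα.trans_le hαβ
  le_limUnder_rpow_of_submultiplicative (minNormProd_add_le _) (lt_min hc (by norm_num))
    (lt_min (by positivity) (by positivity)) fun _ =>
      le_ciInf (hres.le_opNorm_wordProd_smul hH hR hc hlam.le hα hαβ)

/-- If `(H,R)` is resistant with `det H = det R = 1` and `0 < α < β` then
`ϱ̲(αH, βR) > α = √(det(αH))`; more precisely, `(c,ε,λ)`-resistance gives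
`ϱ̲(αH, βR) ≥ min{λα, (β/α)^ε·α}`. -/
theorem stmt11 (H R : Mat2) (hH : H.det = 1) (hR : R.det = 1) (hres : Resistant ![H, R])
    (α β : ℝ) (hα : 0 < α) (hαβ : α < β) :
    α < lsr ![α • H, β • R] ∧ Real.sqrt ((α • H).det) = α ∧
    ∀ c > (0 : ℝ), ∀ ε > (0 : ℝ), ∀ lam > (1 : ℝ), ResistantWith c ε lam ![H, R] →
      min (lam * α) ((β / α) ^ ε * α) ≤ lsr ![α • H, β • R] := by
  have hbound : ∀ c > (0 : ℝ), ∀ ε > (0 : ℝ), ∀ lam > (1 : ℝ), ResistantWith c ε lam ![H, R] →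
      min (lam * α) ((β / α) ^ ε * α) ≤ lsr ![α • H, β • R] :=
    fun c hc _ _ lam hlam hres' => hres'.min_le_lsr_smul hH hR hc (by linarith) hα hαβ.le
  refine ⟨?_, by simp [hH, hα.le], hbound⟩
  obtain ⟨c, hc, ε, hε, lam, hlam, hres'⟩ := hres
  refine lt_of_lt_of_le (lt_min ?_ ?_) (hbound c hc ε hε lam hlam hres')
  · nlinarith
  · nlinarith [Real.one_lt_rpow ((one_lt_div hα).mpr hαβ) hε]

end
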